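/- arXiv:2104.12858 — 2 statements merged into one kernel-verified Lean document; each statement's English description precedes it below -/
import Mathlib

section
/- Let U ⊆ ℂ be open, m ∈ ℝ, let f : U → ℂ be continuously differentiable with ∂̄f + i·m·conj(f) = 0, and let h : U → ℝ be twice continuously differentiable with ∂_x h = Im(f²) and ∂_y h = Re(f²). Then Δh = −4m·|f|² on U. In particular h is subharmonic whenever m ≤ 0. -/
/-- The ∂̄ operator: `(∂_x h + i ∂_y h)/2` computed via the real Fréchet derivative. -/
noncomputable def dbar (h : ℂ → ℂ) (z : ℂ) : ℂ :=
  (fderiv ℝ h z 1 + Complex.I * fderiv ℝ h z Complex.I) / 2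

/-!
Since `∂ₓh = Im(f²)` and `∂_y h = Re(f²) = Im(i f²)`, the Laplacian of `h` is
`Im(2f ∂ₓf + 2f i∂_y f) = Im(4f ∂̄f)`. The massive Dirac equation `∂̄f = -i m f̄` turns
this into `Im(-4i m f f̄) = -4m|f|²`.
-/

open Complex Filter Topology

section
variable {E : Type*} [NormedAddCommGroup E] [NormedSpace ℝ E] {g : E → ℂ} {z : E}

theorem fderiv_re_apply (hg : DifferentiableAt ℝ g z) (v : E) :
    fderiv ℝ (fun w => (g w).re) z v = (fderiv ℝ g z v).re :=
  DFunLike.congr_fun (reCLM.hasFDerivAt.comp z hg.hasFDerivAt).fderiv v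

theorem fderiv_im_apply (hg : DifferentiableAt ℝ g z) (v : E) :
    fderiv ℝ (fun w => (g w).im) z v = (fderiv ℝ g z v).im :=
  DFunLike.congr_fun (imCLM.hasFDerivAt.comp z hg.hasFDerivAt).fderiv v

theorem fderiv_sq_apply (hg : DifferentiableAt ℝ g z) (v : E) :
    fderiv ℝ (fun w => g w ^ 2) z v = 2 * g z * fderiv ℝ g z v := by
  rw [fderiv_fun_pow 2 hg]
  simp

end

theorem fderiv_im_sq_one_add_fderiv_re_sq_I {f : ℂ → ℂ} {z : ℂ}
    (hf : DifferentiableAt ℝ f z) :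
    fderiv ℝ (fun w => (f w ^ 2).im) z 1 + fderiv ℝ (fun w => (f w ^ 2).re) z I
      = (4 * f z * dbar f z).im := by
  have hsq : DifferentiableAt ℝ (fun w => f w ^ 2) z := hf.pow 2
  rw [fderiv_im_apply hsq, fderiv_re_apply hsq, fderiv_sq_apply hf, fderiv_sq_apply hf,
    dbar, ← mul_I_im, ← add_im]
  congr 1
  ring

theorem im_four_mul_mul_neg_I_mul_conj (w : ℂ) (m : ℝ) :
    (4 * w * -(I * m * (starRingEnd ℂ) w)).im = -4 * m * ‖w‖ ^ 2 := by
  rw [Complex.sq_norm, normSq_apply]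
  simp
  ring

theorem laplacian_of_primitive_general (U : Set ℂ) (hU : IsOpen U) (m : ℝ) (f : ℂ → ℂ) (h : ℂ → ℝ)
    (hf : ContDiffOn ℝ 1 f U)
    (hdirac : ∀ z ∈ U, dbar f z + Complex.I * m * (starRingEnd ℂ) (f z) = 0)
    (hx : ∀ z ∈ U, fderiv ℝ h z 1 = ((f z) ^ 2).im)
    (hy : ∀ z ∈ U, fderiv ℝ h z Complex.I = ((f z) ^ 2).re) :
    (∀ z ∈ U,
        fderiv ℝ (fun w => fderiv ℝ h w 1) z 1
          + fderiv ℝ (fun w => fderiv ℝ h w Complex.I) z Complex.I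
          = -4 * m * ‖f z‖ ^ 2) ∧
    (m ≤ 0 → ∀ z ∈ U,
        0 ≤ fderiv ℝ (fun w => fderiv ℝ h w 1) z 1
          + fderiv ℝ (fun w => fderiv ℝ h w Complex.I) z Complex.I) := by
  have hlaplacian : ∀ z ∈ U,
      fderiv ℝ (fun w => fderiv ℝ h w 1) z 1
        + fderiv ℝ (fun w => fderiv ℝ h w Complex.I) z Complex.I
        = -4 * m * ‖f z‖ ^ 2 := by
    intro z hz
    have hzU : U ∈ 𝓝 z := hU.mem_nhds hz
    have hfz : DifferentiableAt ℝ f z := (hf.contDiffAt hzU).differentiableAt one_ne_zero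
    rw [(eventuallyEq_of_mem hzU hx).fderiv_eq, (eventuallyEq_of_mem hzU hy).fderiv_eq,
      fderiv_im_sq_one_add_fderiv_re_sq_I hfz, eq_neg_of_add_eq_zero_left (hdirac z hz)]
    exact im_four_mul_mul_neg_I_mul_conj (f z) m
  refine ⟨hlaplacian, fun hm z hz => ?_⟩
  rw [hlaplacian z hz]
  exact mul_nonneg (by linarith) (sq_nonneg _)

theorem laplacian_of_primitive (U : Set ℂ) (hU : IsOpen U) (m : ℝ) (f : ℂ → ℂ) (h : ℂ → ℝ)
    (hf : ContDiffOn ℝ 1 f U) (hh : ContDiffOn ℝ 2 h U)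
    (hdirac : ∀ z ∈ U, dbar f z + Complex.I * m * (starRingEnd ℂ) (f z) = 0)
    (hx : ∀ z ∈ U, fderiv ℝ h z 1 = ((f z) ^ 2).im)
    (hy : ∀ z ∈ U, fderiv ℝ h z Complex.I = ((f z) ^ 2).re) :
    (∀ z ∈ U,
        fderiv ℝ (fun w => fderiv ℝ h w 1) z 1
          + fderiv ℝ (fun w => fderiv ℝ h w Complex.I) z Complex.I
          = -4 * m * ‖f z‖ ^ 2) ∧
    (m ≤ 0 → ∀ z ∈ U,
        0 ≤ fderiv ℝ (fun w => fderiv ℝ h w 1) z 1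
          + fderiv ℝ (fun w => fderiv ℝ h w Complex.I) z Complex.I) :=
  laplacian_of_primitive_general U hU m f h hf hdirac hx hy
end

section
/- Let m > 0 and, for x > 0, set K₀(x) := ∫_0^∞ e^{−x·cosh t} dt and K₁(x) := ∫_0^∞ e^{−x·cosh t}·cosh t dt. Then the function f : ℂ ∖ {0} → ℂ defined by f(z) = (conj(z)/|z|)·K₁(2m|z|) + i·K₀(2m|z|) satisfies the massive holomorphicity equation ∂̄f + i·m·conj(f) = 0 on ℂ ∖ {0}, where ∂̄ = (∂_x + i∂_y)/2. -/
open MeasureTheory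

/-- Modified Bessel function of the second kind of order 0. -/
noncomputable def K₀ (x : ℝ) : ℝ := ∫ t in Set.Ioi (0 : ℝ), Real.exp (-x * Real.cosh t)

/-- Modified Bessel function of the second kind of order 1. -/
noncomputable def K₁ (x : ℝ) : ℝ :=
  ∫ t in Set.Ioi (0 : ℝ), Real.exp (-x * Real.cosh t) * Real.cosh t

/-!
Write `f w = conj w * g ‖w‖ + I * h ‖w‖` with `g s = K₁ (2ms) / s` and `h s = K₀ (2ms)`.
Since `∂̄ conj = 1` and `∂̄ id = 0`, applying `∂̄` to `‖w‖² = w * conj w` gives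
`∂̄ ‖·‖ = z / (2‖z‖)`, hence `∂̄ f z = g r + r g' r / 2 + I h' r z / (2r)` with `r = ‖z‖`.
Differentiating under the integral sign gives `K₀' = -K₁` and `K₁' = -∫ e^{-x cosh t} cosh² t`,
and integrating `d/dt (e^{-x cosh t} sinh t)` over `(0, ∞)` identifies the latter integral with
`K₀ + K₁ / x`. Substituting, `∂̄ f z = -m K₀ - I m K₁ z / r = -I m (conj (f z))`.
-/

open Set Filter Topology Real

noncomputable def coshMoment (n : ℕ) (x : ℝ) : ℝ :=
  ∫ t in Ioi 0, exp (-x * cosh t) * cosh t ^ n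

lemma K₀_eq_coshMoment : K₀ = coshMoment 0 := by
  ext x; simp [K₀, coshMoment]

lemma K₁_eq_coshMoment : K₁ = coshMoment 1 := by
  ext x; simp [K₁, coshMoment]

lemma self_le_cosh {t : ℝ} (ht : 0 ≤ t) : t ≤ cosh t := by
  rcases ht.eq_or_lt with rfl | ht
  · simp
  · exact ((self_lt_sinh_iff.mpr ht).trans (sinh_lt_cosh t)).le

lemma exp_neg_mul_cosh_mul_cosh_pow_le (n : ℕ) {c t : ℝ} (hc : 0 < c) (ht : 0 ≤ t) :
    exp (-c * cosh t) * cosh t ^ n ≤ n.factorial * (2 / c) ^ n * exp (-(c / 2) * t) := by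
  have hu : (c / 2 * cosh t) ^ n ≤ n.factorial * exp (c / 2 * cosh t) := by
    have := pow_div_factorial_le_exp (x := c / 2 * cosh t) (by positivity) n
    rw [div_le_iff₀ (by positivity)] at this
    linarith
  calc exp (-c * cosh t) * cosh t ^ n
      = (2 / c) ^ n * exp (-c * cosh t) * (c / 2 * cosh t) ^ n := by
        rw [mul_pow, div_pow, div_pow]
        field_simp
    _ ≤ (2 / c) ^ n * exp (-c * cosh t) * (n.factorial * exp (c / 2 * cosh t)) := by
        gcongr
    _ = n.factorial * (2 / c) ^ n * exp (-(c / 2) * cosh t) := by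
        rw [show -(c / 2) * cosh t = -c * cosh t + c / 2 * cosh t by ring, exp_add]
        ring
    _ ≤ n.factorial * (2 / c) ^ n * exp (-(c / 2) * t) :=
        mul_le_mul_of_nonneg_left (exp_le_exp.mpr (by nlinarith [self_le_cosh ht]))
          (by positivity)

lemma integrableOn_exp_neg_mul_cosh_mul_cosh_pow (n : ℕ) {x : ℝ} (hx : 0 < x) :
    IntegrableOn (fun t => exp (-x * cosh t) * cosh t ^ n) (Ioi 0) := by
  refine Integrable.mono' ((exp_neg_integrableOn_Ioi 0 (half_pos hx)).const_mul
    (n.factorial * (2 / x) ^ n)) (Continuous.aestronglyMeasurable (by fun_prop)) ?_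
  filter_upwards [ae_restrict_mem measurableSet_Ioi] with t ht
  rw [norm_of_nonneg (by positivity)]
  exact exp_neg_mul_cosh_mul_cosh_pow_le n hx (le_of_lt ht)

lemma hasDerivAt_coshMoment (n : ℕ) {x : ℝ} (hx : 0 < x) :
    HasDerivAt (coshMoment n) (-coshMoment (n + 1) x) x := by
  have hx2 : 0 < x / 2 := half_pos hx
  have key := hasDerivAt_integral_of_dominated_loc_of_deriv_le (μ := volume.restrict (Ioi 0))
    (F := fun y t => exp (-y * cosh t) * cosh t ^ n)
    (F' := fun y t => -(exp (-y * cosh t) * cosh t ^ (n + 1)))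
    (bound := fun t => (n + 1).factorial * (2 / (x / 2)) ^ (n + 1) * exp (-(x / 2 / 2) * t))
    (Metric.ball_mem_nhds x hx2)
    (Eventually.of_forall fun y => Continuous.aestronglyMeasurable (by fun_prop))
    (integrableOn_exp_neg_mul_cosh_mul_cosh_pow n hx)
    (Continuous.aestronglyMeasurable (by fun_prop)) ?_
    ((exp_neg_integrableOn_Ioi 0 (half_pos hx2)).const_mul _) ?_
  · have hderiv := key.2
    rw [integral_neg] at hderiv
    exact hderiv
  · filter_upwards [ae_restrict_mem measurableSet_Ioi] with t ht y hy
    have hy : x / 2 < y := by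
      have := (abs_lt.mp (mem_ball_iff_norm.mp hy)).1
      linarith
    rw [norm_neg, norm_of_nonneg (by positivity)]
    calc exp (-y * cosh t) * cosh t ^ (n + 1)
        ≤ exp (-(x / 2) * cosh t) * cosh t ^ (n + 1) := by
          gcongr
      _ ≤ _ := exp_neg_mul_cosh_mul_cosh_pow_le (n + 1) hx2 ht.le
  · filter_upwards with t y _
    have h : HasDerivAt (fun y => -y * cosh t) (-cosh t) y := by
      simpa using (hasDerivAt_neg y).mul_const (cosh t)
    exact (h.exp.mul_const (cosh t ^ n)).congr_deriv (by ring)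

lemma coshMoment_two {x : ℝ} (hx : 0 < x) :
    coshMoment 2 x = coshMoment 0 x + coshMoment 1 x / x := by
  set g : ℕ → ℝ → ℝ := fun k t => exp (-x * cosh t) * cosh t ^ k
  have hg (k : ℕ) : IntegrableOn (g k) (Ioi 0) := integrableOn_exp_neg_mul_cosh_mul_cosh_pow k hx
  have hderiv (t : ℝ) : HasDerivAt (fun t => exp (-x * cosh t) * sinh t)
      (g 1 t + x * g 0 t - x * g 2 t) t := by
    refine (((hasDerivAt_cosh t).const_mul (-x)).exp.mul (hasDerivAt_sinh t)).congr_deriv ?_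
    simp only [g]
    linear_combination (-x * exp (-x * cosh t)) * sinh_sq t
  have hF : IntegrableOn (fun t => exp (-x * cosh t) * sinh t) (Ioi 0) := by
    refine (hg 1).mono' (Continuous.aestronglyMeasurable (by fun_prop)) ?_
    filter_upwards [ae_restrict_mem measurableSet_Ioi] with t ht
    rw [norm_of_nonneg (mul_nonneg (exp_pos _).le (sinh_nonneg_iff.mpr (le_of_lt ht)))]
    simpa [g] using mul_le_mul_of_nonneg_left (sinh_lt_cosh t).le (exp_pos (-x * cosh t)).le
  have hsum : IntegrableOn (fun t => g 1 t + x * g 0 t) (Ioi 0) := (hg 1).add ((hg 0).const_mul x)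
  have hint : IntegrableOn (fun t => g 1 t + x * g 0 t - x * g 2 t) (Ioi 0) :=
    hsum.sub ((hg 2).const_mul x)
  have h := integral_Ioi_of_hasDerivAt_of_tendsto' (fun t _ => hderiv t) hint
    (tendsto_zero_of_hasDerivAt_of_integrableOn_Ioi (fun t _ => hderiv t) hint hF)
  rw [integral_sub hsum ((hg 2).const_mul x),
    integral_add (hg 1) ((hg 0).const_mul x), integral_const_mul, integral_const_mul,
    sinh_zero, mul_zero, sub_zero] at h
  change coshMoment 1 x + x * coshMoment 0 x - x * coshMoment 2 x = 0 at h
  field_simp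
  linarith

lemma hasDerivAt_K₀ {x : ℝ} (hx : 0 < x) : HasDerivAt K₀ (-K₁ x) x := by
  rw [K₀_eq_coshMoment, K₁_eq_coshMoment]
  exact hasDerivAt_coshMoment 0 hx

lemma hasDerivAt_K₁ {x : ℝ} (hx : 0 < x) : HasDerivAt K₁ (-K₀ x - K₁ x / x) x := by
  rw [K₁_eq_coshMoment, K₀_eq_coshMoment]
  convert hasDerivAt_coshMoment 1 hx using 1
  rw [coshMoment_two hx]
  ring

open Complex ComplexConjugate

section Dbar

variable {f g : ℂ → ℂ} {z : ℂ}

lemma dbar_add (hf : DifferentiableAt ℝ f z) (hg : DifferentiableAt ℝ g z) :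
    dbar (fun w => f w + g w) z = dbar f z + dbar g z := by
  simp only [dbar, fderiv_fun_add hf hg, add_apply]
  ring

lemma dbar_mul (hf : DifferentiableAt ℝ f z) (hg : DifferentiableAt ℝ g z) :
    dbar (fun w => f w * g w) z = dbar f z * g z + f z * dbar g z := by
  simp only [dbar, fderiv_fun_mul hf hg, add_apply, smul_apply, smul_eq_mul]
  ring

lemma dbar_const (c : ℂ) : dbar (fun _ => c) z = 0 := by
  simp [dbar]

lemma dbar_id : dbar (fun w => w) z = 0 := by
  simp [dbar]

lemma dbar_conj : dbar (fun w => conj w) z = 1 := by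
  rw [dbar, show (fun w => conj w) = ⇑conjCLE from rfl, conjCLE.fderiv]
  simp

lemma dbar_ofReal_comp {u : ℝ → ℝ} {u' : ℝ} {v : ℂ → ℝ} (hu : HasDerivAt u u' (v z))
    (hv : DifferentiableAt ℝ v z) :
    dbar (fun w => (u (v w) : ℂ)) z = u' * dbar (fun w => (v w : ℂ)) z := by
  have huv : HasFDerivAt (fun w => (u (v w) : ℂ)) (ofRealCLM.comp (u' • fderiv ℝ v z)) z :=
    ofRealCLM.hasFDerivAt.comp z (hu.comp_hasFDerivAt z hv.hasFDerivAt)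
  have hv' : HasFDerivAt (fun w => (v w : ℂ)) (ofRealCLM.comp (fderiv ℝ v z)) z :=
    ofRealCLM.hasFDerivAt.comp z hv.hasFDerivAt
  simp only [dbar, huv.fderiv, hv'.fderiv]
  simp only [ContinuousLinearMap.comp_smulₛₗ, ringHom_apply, smul_apply,
    ContinuousLinearMap.comp_apply, ofRealCLM_apply, real_smul]
  ring

lemma dbar_ofReal_norm (hz : z ≠ 0) : dbar (fun w => (‖w‖ : ℂ)) z = z / (2 * ‖z‖) := by
  have hn : DifferentiableAt ℝ (fun w : ℂ => (‖w‖ : ℂ)) z :=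
    ofRealCLM.differentiableAt.comp z (differentiableAt_id.norm ℝ hz)
  have hsq : dbar (fun w => (‖w‖ : ℂ) * ‖w‖) z = z := by
    have hnorm_sq : (fun w : ℂ => (‖w‖ : ℂ) * ‖w‖) = fun w => w * conj w := by
      ext w; rw [mul_conj, normSq_eq_norm_sq]; push_cast; ring
    rw [hnorm_sq, dbar_mul (f := fun w => w) (g := fun w => conj w) differentiableAt_id
      conjCLE.differentiableAt, dbar_id, dbar_conj]
    ring
  rw [dbar_mul hn hn] at hsq
  have hr : (‖z‖ : ℂ) ≠ 0 := ofReal_ne_zero.mpr (norm_ne_zero_iff.mpr hz)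
  field_simp
  linear_combination hsq

lemma differentiableAt_ofReal_comp_norm {φ : ℝ → ℝ} {φ' : ℝ} (hz : z ≠ 0)
    (hφ : HasDerivAt φ φ' ‖z‖) : DifferentiableAt ℝ (fun w => (φ ‖w‖ : ℂ)) z :=
  ofRealCLM.differentiableAt.comp z
    (hφ.differentiableAt.comp z (differentiableAt_id.norm ℝ hz))

lemma dbar_ofReal_comp_norm {φ : ℝ → ℝ} {φ' : ℝ} (hz : z ≠ 0) (hφ : HasDerivAt φ φ' ‖z‖) :
    dbar (fun w => (φ ‖w‖ : ℂ)) z = φ' * z / (2 * ‖z‖) := by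
  rw [dbar_ofReal_comp hφ (differentiableAt_id.norm ℝ hz), dbar_ofReal_norm hz, mul_div_assoc]

lemma dbar_conj_mul_radial_add_I_mul_radial {φ ψ : ℝ → ℝ} {φ' ψ' : ℝ} (hz : z ≠ 0)
    (hφ : HasDerivAt φ φ' ‖z‖) (hψ : HasDerivAt ψ ψ' ‖z‖) :
    dbar (fun w => conj w * φ ‖w‖ + I * ψ ‖w‖) z
      = φ ‖z‖ + φ' * ‖z‖ / 2 + I * ψ' * z / (2 * ‖z‖) := by
  have hconj : DifferentiableAt ℝ (fun w => conj w) z := conjCLE.differentiableAt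
  have hφ' := differentiableAt_ofReal_comp_norm hz hφ
  have hψ' := differentiableAt_ofReal_comp_norm hz hψ
  rw [dbar_add (f := fun w => conj w * φ ‖w‖) (g := fun w => I * ψ ‖w‖) (hconj.mul hφ')
      ((differentiableAt_const I).mul hψ'), dbar_mul hconj hφ',
    dbar_mul (differentiableAt_const I) hψ', dbar_conj, dbar_const,
    dbar_ofReal_comp_norm hz hφ, dbar_ofReal_comp_norm hz hψ]
  have hr : (‖z‖ : ℂ) ≠ 0 := ofReal_ne_zero.mpr (norm_ne_zero_iff.mpr hz)
  field_simp
  linear_combination (φ' : ℂ) * conj_mul' z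

end Dbar

theorem massive_cauchy_kernel_dirac (m : ℝ) (hm : 0 < m) :
    ∀ z : ℂ, z ≠ 0 →
      dbar (fun w => ((starRingEnd ℂ) w / (‖w‖ : ℂ)) * (K₁ (2 * m * ‖w‖) : ℂ)
          + Complex.I * (K₀ (2 * m * ‖w‖) : ℂ)) z
        + Complex.I * m * (starRingEnd ℂ)
            (((starRingEnd ℂ) z / (‖z‖ : ℂ)) * (K₁ (2 * m * ‖z‖) : ℂ)
              + Complex.I * (K₀ (2 * m * ‖z‖) : ℂ)) = 0 := by
  intro z hz
  have hr : 0 < ‖z‖ := norm_pos_iff.mpr hz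
  have hscale : HasDerivAt (fun s => 2 * m * s) (2 * m) ‖z‖ := by
    simpa using (hasDerivAt_id ‖z‖).const_mul (2 * m)
  have hK₁ : HasDerivAt (fun s => K₁ (2 * m * s) / s) _ ‖z‖ :=
    ((hasDerivAt_K₁ (by positivity)).comp _ hscale).div (hasDerivAt_id _) hr.ne'
  have hK₀ : HasDerivAt (fun s => K₀ (2 * m * s)) _ ‖z‖ :=
    (hasDerivAt_K₀ (by positivity)).comp _ hscale
  have hf : (fun w => conj w / (‖w‖ : ℂ) * (K₁ (2 * m * ‖w‖) : ℂ) + I * (K₀ (2 * m * ‖w‖) : ℂ))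
      = fun w => conj w * ((K₁ (2 * m * ‖w‖) / ‖w‖ : ℝ) : ℂ) + I * (K₀ (2 * m * ‖w‖) : ℂ) := by
    ext w; push_cast; ring
  rw [hf, dbar_conj_mul_radial_add_I_mul_radial hz hK₁ hK₀]
  simp only [Function.comp_apply, map_add, map_mul, map_div₀, conj_conj, conj_ofReal, conj_I]
  have hr' : (‖z‖ : ℂ) ≠ 0 := ofReal_ne_zero.mpr hr.ne'
  have hm' : (m : ℂ) ≠ 0 := ofReal_ne_zero.mpr hm.ne'
  push_cast
  field_simp
  linear_combination (-2 * ‖z‖ * m * K₀ (2 * m * ‖z‖) : ℂ) * I_sq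
end
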